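/- Let ζ = e^{iπ/3} ∈ ℂ. For a finite integer list a = (a₁, …, a_m), define E(a) = Σ_{j=0}^{m} ζ^{c_j} where c_j = a₁ + ⋯ + a_j (c₀ = 0). With the Peano-Gosper sequences Tₙ defined by T₁ = (1, 2, −1, −2, 0, −1) and T_{n+1} = Tₙ ++ [1] ++ T̄ₙ ++ [1] ++ T̄ₙ ++ [−1] ++ Tₙ ++ [−1] ++ Tₙ ++ [1] ++ Tₙ ++ [−1] ++ T̄ₙ, we have E(Tₙ) = (2 + ζ)ⁿ for all n ≥ 1; in particular |E(Tₙ)| = (√7)ⁿ. -/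

import Mathlib

/-!
The endpoint is additive up to rotation, `E (A ++ B) = E A + ζ ^ σ(A) * (E B - 1)`, and
reversal with negation only rotates it, `E (S̄) = ζ ^ (-σ S) * E S`. Since `σ (Tₙ) = -1`,
`E (Tₙ₊₁)` is a combination of `E (Tₙ)` with coefficients in `ℤ[ζ]`, which collapses to
`(2 + ζ) * E (Tₙ)` using `ζ ^ 2 = ζ - 1`; and `|2 + ζ| ^ 2 = (5/2) ^ 2 + 3/4 = 7`.
-/

/-- Reverse a list and negate each entry. -/
def revneg (S : List ℤ) : List ℤ := (S.reverse).map (fun a => -a)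

/-- The turning sequence `Tₙ` of the Peano-Gosper curve of order `n`. -/
def gosper : ℕ → List ℤ
  | 0 => []
  | 1 => [1, 2, -1, -2, 0, -1]
  | (n + 2) =>
      let g := gosper (n + 1)
      let r := revneg g
      g ++ [1] ++ r ++ [1] ++ r ++ [-1] ++ g ++ [-1] ++ g ++ [1] ++ g ++ [-1] ++ r

/-- The primitive sixth root of unity `ζ = e^{iπ/3}`. -/
noncomputable def ζ : ℂ := Complex.exp (Real.pi * Complex.I / 3)

/-- The endpoint of the unit-step path with turning sequence `a`:
`E a = Σ_{j=0}^{m} ζ^{c_j}` where `c_j` is the `j`-th partial sum of `a`. -/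
noncomputable def endpointG (a : List ℤ) : ℂ :=
  ((List.range (a.length + 1)).map (fun j => ζ ^ ((a.take j).sum))).sum

lemma zeta_ne_zero : ζ ≠ 0 := Complex.exp_ne_zero _

lemma zeta_eq : ζ = (1 + Real.sqrt 3 * Complex.I) / 2 := by
  have h : (Real.pi * Complex.I / 3 : ℂ) = ((Real.pi / 3 : ℝ) : ℂ) * Complex.I := by
    push_cast; ring
  rw [ζ, h, Complex.exp_mul_I, ← Complex.ofReal_cos, ← Complex.ofReal_sin,
    Real.cos_pi_div_three, Real.sin_pi_div_three]
  push_cast; ring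

lemma zeta_sq : ζ ^ 2 = ζ - 1 := by
  have h3 : ((Real.sqrt 3 : ℝ) : ℂ) ^ 2 = 3 := by
    rw [← Complex.ofReal_pow, Real.sq_sqrt (by norm_num : (0:ℝ) ≤ 3)]; norm_num
  rw [zeta_eq]
  linear_combination (Complex.I ^ 2 / 4) * h3 + (3 / 4 : ℂ) * Complex.I_sq

lemma zeta_zpow_two : ζ ^ (2 : ℤ) = ζ - 1 := by
  rw [zpow_ofNat, zeta_sq]

lemma zeta_zpow_three : ζ ^ (3 : ℤ) = -1 := by
  rw [zpow_ofNat]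
  linear_combination (ζ + 1) * zeta_sq

lemma zeta_zpow_neg_one : ζ ^ (-1 : ℤ) = 1 - ζ := by
  rw [zpow_neg_one]
  exact inv_eq_of_mul_eq_one_right (by linear_combination -zeta_sq)

lemma zeta_zpow_neg_two : ζ ^ (-2 : ℤ) = -ζ := by
  rw [show (-2 : ℤ) = -1 + -1 by norm_num, zpow_add₀ zeta_ne_zero, zeta_zpow_neg_one]
  linear_combination zeta_sq

lemma norm_two_add_zeta : ‖2 + ζ‖ = Real.sqrt 7 := by
  have hre : (2 + ζ).re = 5 / 2 := by rw [zeta_eq]; simp; norm_num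
  have him : (2 + ζ).im = Real.sqrt 3 / 2 := by rw [zeta_eq]; simp
  rw [Complex.norm_def, Complex.normSq_apply, hre, him]
  congr 1
  nlinarith [Real.sq_sqrt (show (0 : ℝ) ≤ 3 by norm_num)]

@[simp]
lemma endpointG_nil : endpointG [] = 1 := by simp [endpointG]

lemma endpointG_cons (x : ℤ) (a : List ℤ) :
    endpointG (x :: a) = 1 + ζ ^ x * endpointG a := by
  unfold endpointG
  rw [List.length_cons, List.range_succ_eq_map]
  simp only [List.map_cons, List.map_map, List.sum_cons, List.take_zero, List.sum_nil,
    zpow_zero, Function.comp_def, List.take_succ_cons, zpow_add₀ zeta_ne_zero,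
    List.sum_map_mul_left]

lemma endpointG_append (a b : List ℤ) :
    endpointG (a ++ b) = endpointG a + ζ ^ a.sum * (endpointG b - 1) := by
  induction a with
  | nil => simp
  | cons x a ih =>
      simp only [List.cons_append, endpointG_cons, ih, List.sum_cons, zpow_add₀ zeta_ne_zero]
      ring

lemma sum_revneg (S : List ℤ) : (revneg S).sum = -S.sum := by
  simp [revneg, ← List.sum_neg]

lemma revneg_cons (x : ℤ) (S : List ℤ) : revneg (x :: S) = revneg S ++ [-x] := by
  simp [revneg]

lemma endpointG_revneg (S : List ℤ) :
    endpointG (revneg S) = ζ ^ (-S.sum) * endpointG S := by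
  induction S with
  | nil => simp [revneg]
  | cons x S ih =>
      have hx : ζ ^ x ≠ 0 := zpow_ne_zero x zeta_ne_zero
      have hS : ζ ^ S.sum ≠ 0 := zpow_ne_zero S.sum zeta_ne_zero
      rw [revneg_cons, endpointG_append, ih, sum_revneg, endpointG_cons, endpointG_cons,
        endpointG_nil, List.sum_cons, neg_add, zpow_add₀ zeta_ne_zero, zpow_neg, zpow_neg]
      field_simp
      ring

lemma sum_gosper_succ : ∀ n : ℕ, (gosper (n + 1)).sum = -1
  | 0 => by simp [gosper]
  | n + 1 => by simp [gosper, sum_revneg, sum_gosper_succ n]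

lemma endpointG_gosper : ∀ n : ℕ, endpointG (gosper n) = (2 + ζ) ^ n
  | 0 => by simp [gosper]
  | 1 => by
      simp only [gosper, endpointG_cons, endpointG_nil, zpow_one, zpow_zero, zeta_zpow_two,
        zeta_zpow_neg_one, zeta_zpow_neg_two]
      linear_combination (-ζ ^ 3 + 4 * ζ ^ 2 - 3 * ζ - 1) * zeta_sq
  | n + 2 => by
      -- the sums `-1` of `Tₙ` and `1` of `T̄ₙ` make every prefix sum fall in `[-2, 3]`
      have hsum : (gosper (n + 1)).sum = -1 := sum_gosper_succ n
      have hsum_rev : (revneg (gosper (n + 1))).sum = 1 := by rw [sum_revneg, hsum, neg_neg]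
      have ih := endpointG_gosper (n + 1)
      have ih_rev : endpointG (revneg (gosper (n + 1))) = ζ * (2 + ζ) ^ (n + 1) := by
        rw [endpointG_revneg, hsum, ih, neg_neg, zpow_one]
      rw [gosper]
      simp only [endpointG_append, List.sum_append, endpointG_cons, endpointG_nil,
        List.sum_cons, List.sum_nil, hsum, ih, ih_rev, hsum_rev, Int.reduceAdd, Int.reduceNeg,
        add_zero]
      simp only [zpow_zero, zpow_one, zeta_zpow_two, zeta_zpow_three, zeta_zpow_neg_one,
        zeta_zpow_neg_two]
      linear_combination -zeta_sq

theorem endpoint_gosper_general (n : ℕ) :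
    endpointG (gosper n) = (2 + ζ) ^ n ∧
    ‖endpointG (gosper n)‖ = (Real.sqrt 7) ^ n := by
  rw [endpointG_gosper, norm_pow, norm_two_add_zeta]
  exact ⟨rfl, rfl⟩

theorem endpoint_gosper (n : ℕ) (hn : 1 ≤ n) :
    endpointG (gosper n) = (2 + ζ) ^ n ∧
    ‖endpointG (gosper n)‖ = (Real.sqrt 7) ^ n :=
  endpoint_gosper_general n
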